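/- Let G be a subgroup of S₂₄ that is transitive and contains a subgroup isomorphic to S₁₂ embedded diagonally on the two blocks {1,...,12} and {13,...,24} (i.e. the image of the map f with f(σ)(i) = σ(i) for i ≤ 12 and f(σ)(i) = σ(i-12)+12 for i > 12), and a subgroup H₂ that is a conjugate in S₂₄ of the triple-diagonal embedding of S₈ on the blocks {1,...,8}, {9,...,16}, {17,...,24}. Then G preserves no nontrivial partition of {1,...,24}, i.e. G is primitive. -/

import Mathlib

open Equiv

/-- The diagonal embedding of `S₁₂` into `S₂₄` acting on the two blocks
`{0,...,11}` and `{12,...,23}`. -/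
noncomputable def fEmb (σ : Equiv.Perm (Fin 12)) : Equiv.Perm (Fin 24) :=
  Equiv.permCongr (finSumFinEquiv : Fin 12 ⊕ Fin 12 ≃ Fin 24) (Equiv.Perm.sumCongr σ σ)

/-- The triple-diagonal embedding of `S₈` into `S₂₄` acting on the three blocks
`{0,...,7}`, `{8,...,15}`, `{16,...,23}`. -/
noncomputable def gEmb (σ : Equiv.Perm (Fin 8)) : Equiv.Perm (Fin 24) :=
  Equiv.permCongr
    (((Equiv.sumCongr (finSumFinEquiv : Fin 8 ⊕ Fin 8 ≃ Fin 16) (Equiv.refl (Fin 8))).trans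
        (finSumFinEquiv : Fin 16 ⊕ Fin 8 ≃ Fin 24)))
    (Equiv.Perm.sumCongr (Equiv.Perm.sumCongr σ σ) σ)

/-
Pulled back along `Fin 2 × Fin 12 ≃ Fin 24`, a `G`-invariant equivalence relation becomes invariant
under `S₁₂` acting on the second factor. As `S₁₂` is 2-transitive, such a relation only depends on
which orbits of pairs it contains; with the transitivity of `G` this leaves the trivial relations,
the twelve pairs `{(0, i), (1, i)}` and the two halves `{a} × Fin 12`.
Pulled back instead along `c` and `Fin 3 × Fin 8 ≃ Fin 24`, the relation is invariant under `S₈`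
acting on the second factor, which rules out both. For the pairs, the partner map commutes with
`S₈`, so it keeps the `Fin 8` coordinate and induces a fixed-point-free involution of `Fin 3`. For
the halves, a transposition of `S₈` fixes points of every block `{a} × Fin 8`, so it cannot swap the
two halves; hence each half is a union of blocks of size 8, which is impossible for 12 points.
-/

open Function Finset

theorem exists_ne_ne_of_two_lt_card {α : Type*} [Fintype α] [DecidableEq α]
    (hα : 2 < Fintype.card α) (i j : α) : ∃ k, k ≠ i ∧ k ≠ j := by
  obtain ⟨k, -, hk⟩ :=
    exists_mem_notMem_of_card_lt_card (s := {i, j}) (t := univ) (card_le_two.trans_lt hα)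
  exact ⟨k, by simpa [not_or] using hk⟩

theorem exists_rel_ne_of_transitive {X : Type*} {G : Set (Perm X)} {r : X → X → Prop}
    (htrans : ∀ x y, ∃ g ∈ G, g x = y) (hinv : ∀ g ∈ G, ∀ x y, r x y → r (g x) (g y))
    (hr : ¬ ∀ x y, r x y → x = y) (x : X) : ∃ y, y ≠ x ∧ r x y := by
  push Not at hr
  obtain ⟨x₀, y₀, h, hne⟩ := hr
  obtain ⟨g, hg, rfl⟩ := htrans x₀ x
  exact ⟨g y₀, g.injective.ne hne.symm, hinv g hg _ _ h⟩

section DiagonalAction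

variable {ι α : Type*}

def DiagInvariant (R : ι × α → ι × α → Prop) : Prop :=
  ∀ (σ : Perm α) (u v : ι × α), R u v → R (u.1, σ u.2) (v.1, σ v.2)

theorem diagInvariant_onFun {X : Type*} {r : X → X → Prop} (e : ι × α → X)
    (g : Perm α → Perm X) (hge : ∀ σ u, g σ (e u) = e (u.1, σ u.2))
    (hr : ∀ σ x y, r x y → r (g σ x) (g σ y)) : DiagInvariant (r on e) := fun σ u v h => by
  simpa only [onFun, hge] using hr σ _ _ h

namespace DiagInvariant

variable {R : ι × α → ι × α → Prop}

theorem rel_of_ne (hR : DiagInvariant R) {a b : ι} {i j i' j' : α} (h : R (a, i) (b, j))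
    (hij : i ≠ j) (hij' : i' ≠ j') : R (a, i') (b, j') := by
  obtain ⟨σ, hi, hj⟩ :=
    MulAction.is_two_pretransitive_iff.mp (Perm.isMultiplyPretransitive α 2) hij hij'
  rw [Perm.smul_def] at hi hj
  simpa [hi, hj] using hR σ _ _ h

theorem rel_of_eq [DecidableEq α] (hR : DiagInvariant R) {a b : ι} {i : α}
    (h : R (a, i) (b, i)) (j : α) : R (a, j) (b, j) := by
  simpa using hR (swap i j) _ _ h

theorem rel_of_snd_ne [Fintype α] [DecidableEq α] (hR : DiagInvariant R) (he : Equivalence R)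
    (hα : 2 < Fintype.card α) {a b : ι} {i j : α} (h : R (a, i) (b, j)) (hij : i ≠ j)
    (k l : α) : R (a, k) (b, l) := by
  by_cases hkl : k = l
  · subst hkl
    obtain ⟨m, hmk, -⟩ := exists_ne_ne_of_two_lt_card hα k k
    obtain ⟨l, hlk, hlm⟩ := exists_ne_ne_of_two_lt_card hα k m
    exact he.trans (hR.rel_of_ne h hij hlk.symm)
      (he.trans (he.symm (hR.rel_of_ne h hij hlm.symm)) (hR.rel_of_ne h hij hmk))
  · exact hR.rel_of_ne h hij hkl

theorem rel_iff_fst_eq (hR : DiagInvariant R) (he : Equivalence R) [Fintype α] [DecidableEq α]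
    (hα : 2 < Fintype.card α) (hfst : ∀ u v, R u v → u.1 = v.1)
    (hpartner : ∀ u, ∃ v, v ≠ u ∧ R u v) (u v : ι × α) : R u v ↔ u.1 = v.1 := by
  refine ⟨hfst u v, fun huv => ?_⟩
  obtain ⟨w, hwu, hw⟩ := hpartner u
  have hsnd : u.2 ≠ w.2 := fun h => hwu (Prod.ext (hfst u w hw).symm h.symm)
  have := hR.rel_of_snd_ne he hα hw hsnd u.2 v.2
  rwa [(hfst u w hw).symm.trans huv] at this

theorem even_card_of_rel_iff [Fintype ι] [Fintype α] [DecidableEq α] (hR : DiagInvariant R)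
    (he : Equivalence R) (hα : 2 < Fintype.card α) (M : ι × α → ι × α) (hM : ∀ u, M u ≠ u)
    (hRM : ∀ u v, R u v ↔ v = u ∨ v = M u) : Even (Fintype.card ι) := by
  have hrel : ∀ u, R u (M u) := fun u => (hRM u _).2 (Or.inr rfl)
  have hsnd : ∀ u, (M u).2 = u.2 := by
    intro u
    by_contra hne
    obtain ⟨k, hku, hkM⟩ := exists_ne_ne_of_two_lt_card hα u.2 (M u).2
    rcases (hRM u _).1 (hR.rel_of_snd_ne he hα (hrel u) (Ne.symm hne) u.2 k) with h | h
    · exact hku (congrArg Prod.snd h)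
    · exact hkM (congrArg Prod.snd h)
  have hMM : ∀ u, M (M u) = u := fun u =>
    ((hRM (M u) u).1 (he.symm (hrel u))).resolve_left (hM u).symm |>.symm
  obtain ⟨i₀⟩ : Nonempty α := Fintype.card_pos_iff.mp (by omega)
  have hM₀ : ∀ a, M (a, i₀) = ((M (a, i₀)).1, i₀) := fun a => Prod.ext rfl (hsnd _)
  have hm : Involutive fun a => (M (a, i₀)).1 := fun a => by
    simp only
    rw [← hM₀, hMM]
  by_contra hodd
  obtain ⟨a, ha⟩ := Perm.exists_fixed_point_of_prime (p := 2) (n := 1)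
    (by rwa [← even_iff_two_dvd]) (σ := hm.toPerm) (by ext; simp [sq, hm _])
  exact hM (a, i₀) ((hM₀ a).trans (by simpa using ha))

theorem card_dvd_card_filter [Fintype ι] [DecidableEq ι] [Fintype α] [DecidableEq α]
    (hR : DiagInvariant R) (hα : 2 < Fintype.card α) (P : ι × α → Prop) [DecidablePred P]
    (hRP : ∀ u v, R u v ↔ (P u ↔ P v)) : Fintype.card α ∣ #{u | P u} := by
  have hfiber : ∀ a i j, P (a, i) → P (a, j) := by
    intro a i j hi
    by_contra hj
    obtain ⟨k, hki, hkj⟩ := exists_ne_ne_of_two_lt_card hα i j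
    have hk : swap i j k = k := swap_apply_of_ne_of_ne hki hkj
    by_cases hPk : P (a, k)
    · have := hR (swap i j) (a, i) (a, k) ((hRP _ _).2 (iff_of_true hi hPk))
      simp only [swap_apply_left, hk] at this
      exact hj (((hRP _ _).1 this).2 hPk)
    · have := hR (swap i j) (a, j) (a, k) ((hRP _ _).2 (iff_of_false hj hPk))
      simp only [swap_apply_right, hk] at this
      exact hPk (((hRP _ _).1 this).1 hi)
  obtain ⟨i₀⟩ : Nonempty α := Fintype.card_pos_iff.mp (by omega)
  have : ({u | P u} : Finset (ι × α)) = ({a | P (a, i₀)} : Finset ι) ×ˢ univ := by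
    ext ⟨a, i⟩
    simpa using ⟨hfiber a i i₀, hfiber a i₀ i⟩
  rw [this, card_product, card_univ]
  exact dvd_mul_left _ _

end DiagInvariant

end DiagonalAction

theorem Fin.rev_ne_self_of_even {n : ℕ} (hn : Even n) (a : Fin n) : a.rev ≠ a := by
  obtain ⟨k, rfl⟩ := hn
  intro h
  have := congrArg Fin.val h
  simp only [Fin.val_rev] at this
  omega

section FinTwo

variable {α : Type*} {R : Fin 2 × α → Fin 2 × α → Prop}

theorem rel_iff_snd_eq_of_rel_zero_one (he : Equivalence R) (h01 : ∀ k, R (0, k) (1, k))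
    (hsnd : ∀ u v, R u v → u.1 ≠ v.1 → u.2 = v.2) (u v : Fin 2 × α) : R u v ↔ u.2 = v.2 := by
  have hcol : ∀ u v : Fin 2 × α, u.2 = v.2 → R u v := by
    rintro ⟨a, k⟩ ⟨b, l⟩ (rfl : k = l)
    fin_cases a <;> fin_cases b
    exacts [he.refl _, h01 k, he.symm (h01 k), he.refl _]
  refine ⟨fun h => ?_, hcol u v⟩
  exact hsnd u (u.1.rev, v.2) (he.trans h (hcol _ _ rfl))
    (Fin.rev_ne_self_of_even even_two u.1).symm

namespace DiagInvariant

theorem forall_rel_of_rel_zero_one [Fintype α] [DecidableEq α] (hR : DiagInvariant R)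
    (he : Equivalence R) (hα : 2 < Fintype.card α) {i j : α} (h : R (0, i) (1, j))
    (hij : i ≠ j) (u v : Fin 2 × α) : R u v := by
  have h01 := hR.rel_of_snd_ne he hα h hij
  obtain ⟨a, k⟩ := u
  obtain ⟨b, l⟩ := v
  fin_cases a <;> fin_cases b
  · exact he.trans (h01 k l) (he.symm (h01 l l))
  · exact h01 k l
  · exact he.symm (h01 l k)
  · exact he.trans (he.symm (h01 k k)) (h01 k l)

theorem fin_two_trichotomy [Fintype α] [DecidableEq α] (hR : DiagInvariant R)
    (he : Equivalence R) (hα : 2 < Fintype.card α) (hpartner : ∀ u, ∃ v, v ≠ u ∧ R u v) :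
    (∀ u v, R u v) ∨ (∀ u v, R u v ↔ u.2 = v.2) ∨ (∀ u v, R u v ↔ u.1 = v.1) := by
  by_cases hthick : ∃ i j, i ≠ j ∧ R (0, i) (1, j)
  · obtain ⟨i, j, hij, h⟩ := hthick
    exact Or.inl (hR.forall_rel_of_rel_zero_one he hα h hij)
  push Not at hthick
  have hsnd : ∀ u v, R u v → u.1 ≠ v.1 → u.2 = v.2 := by
    rintro ⟨a, k⟩ ⟨b, l⟩ h hab
    by_contra hkl
    fin_cases a <;> fin_cases b
    exacts [hab rfl, hthick k l hkl h, hthick l k (Ne.symm hkl) (he.symm h), hab rfl]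
  by_cases hthin : ∃ i, R (0, i) (1, i)
  · obtain ⟨i, h⟩ := hthin
    exact Or.inr (Or.inl (rel_iff_snd_eq_of_rel_zero_one he (hR.rel_of_eq h) hsnd))
  push Not at hthin
  refine Or.inr (Or.inr (hR.rel_iff_fst_eq he hα ?_ hpartner))
  rintro ⟨a, k⟩ ⟨b, l⟩ h
  by_contra hab
  obtain rfl : k = l := hsnd _ _ h hab
  fin_cases a <;> fin_cases b
  exacts [hab rfl, hthin k h, hthin k (he.symm h), hab rfl]

end DiagInvariant

end FinTwo

theorem not_diagInvariant_snd_eq (φ : Fin 3 × Fin 8 ≃ Fin 2 × Fin 12) :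
    ¬ DiagInvariant fun u v => (φ u).2 = (φ v).2 := by
  intro h
  have hcol : ∀ w w' : Fin 2 × Fin 12, w.2 = w'.2 ↔ w' = w ∨ w' = (w.1.rev, w.2) := by
    rintro ⟨a, i⟩ ⟨b, j⟩
    fin_cases a <;> fin_cases b <;> simp [eq_comm]
  have h3 := h.even_card_of_rel_iff ⟨fun _ => rfl, Eq.symm, Eq.trans⟩ (by simp)
    (fun u => φ.symm ((φ u).1.rev, (φ u).2)) (fun u hu => ?_) (fun u v => ?_)
  · exact absurd h3 (by decide)
  · rw [Equiv.symm_apply_eq] at hu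
    exact Fin.rev_ne_self_of_even even_two _ (congrArg Prod.fst hu)
  · rw [hcol, φ.apply_eq_iff_eq, Equiv.eq_symm_apply]

theorem not_diagInvariant_fst_eq (φ : Fin 3 × Fin 8 ≃ Fin 2 × Fin 12) :
    ¬ DiagInvariant fun u v => (φ u).1 = (φ v).1 := by
  intro h
  have h8 := h.card_dvd_card_filter (by simp) (fun u => (φ u).1 = 0) (fun u v => ?_)
  · have hcard : #{u | (φ u).1 = 0} = 12 := by
      rw [card_equiv φ (t := {w | w.1 = 0}) (by simp)]
      rfl
    rw [hcard] at h8
    exact absurd h8 (by decide)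
  · have hfin2 : ∀ a b : Fin 2, a = b ↔ (a = 0 ↔ b = 0) := by decide
    exact hfin2 _ _

theorem fEmb_finProdFinEquiv (σ : Perm (Fin 12)) (u : Fin 2 × Fin 12) :
    fEmb σ (finProdFinEquiv u) = finProdFinEquiv (u.1, σ u.2) := by
  have h0 : ∀ j : Fin 12, (finProdFinEquiv ((0 : Fin 2), j) : Fin 24) =
      finSumFinEquiv (m := 12) (n := 12) (Sum.inl j) := by
    decide
  have h1 : ∀ j : Fin 12, (finProdFinEquiv ((1 : Fin 2), j) : Fin 24) =
      finSumFinEquiv (m := 12) (n := 12) (Sum.inr j) := by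
    decide
  obtain ⟨a, i⟩ := u
  fin_cases a <;> simp [h0, h1, fEmb, permCongr_apply]

theorem gEmb_finProdFinEquiv (σ : Perm (Fin 8)) (u : Fin 3 × Fin 8) :
    gEmb σ (finProdFinEquiv u) = finProdFinEquiv (u.1, σ u.2) := by
  have h0 : ∀ j : Fin 8, (finProdFinEquiv ((0 : Fin 3), j) : Fin 24) =
      finSumFinEquiv (m := 16) (n := 8)
        (Sum.inl (finSumFinEquiv (m := 8) (n := 8) (Sum.inl j))) := by
    decide
  have h1 : ∀ j : Fin 8, (finProdFinEquiv ((1 : Fin 3), j) : Fin 24) =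
      finSumFinEquiv (m := 16) (n := 8)
        (Sum.inl (finSumFinEquiv (m := 8) (n := 8) (Sum.inr j))) := by
    decide
  have h2 : ∀ j : Fin 8, (finProdFinEquiv ((2 : Fin 3), j) : Fin 24) =
      finSumFinEquiv (m := 16) (n := 8) (Sum.inr j) := by
    decide
  obtain ⟨a, i⟩ := u
  fin_cases a <;> simp [h0, h1, h2, gEmb, permCongr_apply]

theorem stmt_7 (G : Subgroup (Equiv.Perm (Fin 24)))
    (htrans : ∀ x y : Fin 24, ∃ g ∈ G, g x = y)
    (hf : ∀ σ : Equiv.Perm (Fin 12), fEmb σ ∈ G)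
    (hg : ∃ c : Equiv.Perm (Fin 24), ∀ σ : Equiv.Perm (Fin 8), c * gEmb σ * c⁻¹ ∈ G) :
    ∀ r : Fin 24 → Fin 24 → Prop, Equivalence r →
      (∀ g ∈ G, ∀ x y : Fin 24, r x y → r (g x) (g y)) →
      (∀ x y : Fin 24, r x y → x = y) ∨ (∀ x y : Fin 24, r x y) := by
  intro r hr hinv
  by_cases hid : ∀ x y, r x y → x = y
  · exact Or.inl hid
  right
  obtain ⟨c, hc⟩ := hg
  let e : Fin 2 × Fin 12 ≃ Fin 24 := finProdFinEquiv
  let φ : Fin 3 × Fin 8 ≃ Fin 2 × Fin 12 := finProdFinEquiv.trans (c.trans e.symm)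
  have h12 : DiagInvariant (r on e) :=
    diagInvariant_onFun e fEmb fEmb_finProdFinEquiv (fun σ => hinv _ (hf σ))
  have h8 : DiagInvariant ((r on e) on φ) :=
    diagInvariant_onFun (e ∘ φ) (fun σ => c * gEmb σ * c⁻¹)
      (fun σ u => by simpa [φ, e] using gEmb_finProdFinEquiv σ u) (fun σ => hinv _ (hc σ))
  have hpartner : ∀ u, ∃ v, v ≠ u ∧ (r on e) u v := fun u => by
    obtain ⟨y, hy, hry⟩ := exists_rel_ne_of_transitive htrans hinv hid (e u)
    exact ⟨e.symm y, by rwa [Ne, symm_apply_eq], by simpa [onFun] using hry⟩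
  rcases h12.fin_two_trichotomy (hr.comap e) (by simp) hpartner with huniv | hpairs | hhalves
  · intro x y
    simpa [onFun] using huniv (e.symm x) (e.symm y)
  · rw [show (r on e) = fun w w' => w.2 = w'.2 from funext₂ (propext <| hpairs · ·)] at h8
    exact absurd h8 (not_diagInvariant_snd_eq φ)
  · rw [show (r on e) = fun w w' => w.1 = w'.1 from funext₂ (propext <| hhalves · ·)] at h8
    exact absurd h8 (not_diagInvariant_fst_eq φ)
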